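/- arXiv:1908.02930 — 4 statements merged into one kernel-verified Lean document; each statement's English description precedes it below -/
import Mathlib

section
/- Let G be a countable group acting by homeomorphisms on a compact Hausdorff space X, and let φ be a homeomorphism of X commuting with the action of every g ∈ G. If the action of Aut(G,X) on X is proximal (for every x, y ∈ X there is a net (g_i) in Aut(G,X) with lim g_i x = lim g_i y) and the G-action is free (g x ≠ x for all x and all nontrivial g), then we reach a contradiction; i.e., if (G,X) is free then (Aut(G,X), X) is not proximal. -/
open Filter Topology

theorem isFixedPt_of_tendsto_of_commute {X ι : Type*} [TopologicalSpace X] [T2Space X]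
    {l : Filter ι} [l.NeBot] {T : X → X} (hT : Continuous T) {f : ι → X → X}
    (hf : ∀ i, Function.Commute (f i) T) {x w : X}
    (hx : Tendsto (fun i => f i x) l (𝓝 w)) (hTx : Tendsto (fun i => f i (T x)) l (𝓝 w)) :
    Function.IsFixedPt T w := by
  have hTw : Tendsto (fun i => f i (T x)) l (𝓝 (T w)) := by
    simpa only [Function.comp_def, (hf _).eq] using (hT.tendsto w).comp hx
  exact tendsto_nhds_unique hTw hTx

theorem stmt0_general {G X : Type*} [Group G] [TopologicalSpace X]
    [T2Space X] [Nonempty X] [Nontrivial G]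
    [MulAction G X] (hcont : ∀ g : G, Continuous (fun x : X => g • x))
    (hfree : ∀ (g : G) (x : X), g • x = x → g = 1)
    (hprox : ∀ x y : X, ∃ (ι : Type) (l : Filter ι) (_ : l.NeBot)
      (φ : ι → {ψ : X ≃ₜ X // ∀ (g : G) (z : X), ψ (g • z) = g • ψ z}) (w : X),
      Tendsto (fun i => (φ i).val x) l (𝓝 w) ∧ Tendsto (fun i => (φ i).val y) l (𝓝 w)) :
    False := by
  obtain ⟨g, hg⟩ := exists_ne (1 : G)
  obtain ⟨x⟩ := ‹Nonempty X›
  obtain ⟨ι, l, hl, φ, w, hx, hgx⟩ := hprox x (g • x)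
  have hw : g • w = w :=
    isFixedPt_of_tendsto_of_commute (hcont g) (fun i z => (φ i).prop g z) hx hgx
  exact hg (hfree g w hw)

/-- If a continuous action of a nontrivial group `G` on a nonempty compact Hausdorff space `X`
is free, then the action of the automorphism group `Aut(G,X)` (homeomorphisms commuting with
every `g ∈ G`) on `X` is not proximal. -/
theorem stmt0 {G X : Type*} [Group G] [Countable G] [TopologicalSpace X]
    [CompactSpace X] [T2Space X] [Nonempty X] [Nontrivial G]
    [MulAction G X] (hcont : ∀ g : G, Continuous (fun x : X => g • x))
    (hfree : ∀ (g : G) (x : X), g • x = x → g = 1)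
    (hprox : ∀ x y : X, ∃ (ι : Type) (l : Filter ι) (_ : l.NeBot)
      (φ : ι → {ψ : X ≃ₜ X // ∀ (g : G) (z : X), ψ (g • z) = g • ψ z}) (w : X),
      Tendsto (fun i => (φ i).val x) l (𝓝 w) ∧ Tendsto (fun i => (φ i).val y) l (𝓝 w)) :
    False :=
  stmt0_general hcont hfree hprox
end

section
/- Let G be a countable group, A a finite alphabet, Σ ⊆ A^G a shift, and φ an automorphism of (G,Σ). Then there exists a finite set K ⊆ G containing the identity and a map Φ : A^K → A such that for all σ ∈ Σ and g ∈ G, [φ(σ)](g) = Φ((g⁻¹·σ)|_K). (Curtis–Hedlund–Lyndon theorem for subshifts.) -/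
/-- Curtis–Hedlund–Lyndon theorem for subshifts: every automorphism `φ` of a shift `(G, Σ)`
admits a finite memory set `K ∋ 1` and a local rule `Φ : A^K → A` such that
`φ(σ)(g) = Φ((g⁻¹ · σ)|_K)`, i.e. `φ(σ)(g) = Φ (fun k => σ (g * k))`. -/
theorem stmt3 {G A : Type*} [Group G] [Countable G] [Fintype A]
    [TopologicalSpace A] [DiscreteTopology A]
    (S : Set (G → A)) (hclosed : IsClosed S)
    (hinv : ∀ (g : G), ∀ x ∈ S, (fun h => x (g⁻¹ * h)) ∈ S)
    (φ : {x : G → A // x ∈ S} ≃ₜ {x : G → A // x ∈ S})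
    (hcomm : ∀ (g : G) (σ : {x : G → A // x ∈ S}),
      (φ ⟨fun h => σ.val (g⁻¹ * h), hinv g σ.val σ.prop⟩).val
        = fun h => (φ σ).val (g⁻¹ * h)) :
    ∃ (K : Finset G) (_ : (1 : G) ∈ K) (Φ : ({k : G // k ∈ K} → A) → A),
      ∀ (σ : {x : G → A // x ∈ S}) (g : G),
        (φ σ).val g = Φ (fun k => σ.val (g * k.val)) := by
  classical
  have hScompact : IsCompact S := hclosed.isCompact
  set f : {x : G → A // x ∈ S} → A := fun σ => (φ σ).val 1 with hf
  have hfcont : Continuous f := (continuous_apply 1).comp (continuous_subtype_val.comp φ.continuous)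
  -- local constancy: each σ has a finite window F σ determining f
  have step : ∀ σ : {x : G → A // x ∈ S}, ∃ F : Finset G,
      ∀ τ : {x : G → A // x ∈ S}, (∀ k ∈ F, τ.val k = σ.val k) → f τ = f σ := by
    intro σ
    have hopen : IsOpen (f ⁻¹' {f σ}) := hfcont.isOpen_preimage _ (isOpen_discrete _)
    rw [isOpen_induced_iff] at hopen
    obtain ⟨U, hUopen, hU⟩ := hopen
    have hσU : σ.val ∈ U := by
      have : σ ∈ f ⁻¹' {f σ} := rfl
      rw [← hU] at this; exact this
    rw [isOpen_pi_iff] at hUopen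
    obtain ⟨I, u, hIu, hsub⟩ := hUopen σ.val hσU
    refine ⟨I, fun τ hτ => ?_⟩
    have hτU : τ.val ∈ U := by
      apply hsub
      intro k hk
      rw [hτ k hk]
      exact (hIu k hk).2
    have : τ ∈ f ⁻¹' {f σ} := by rw [← hU]; exact hτU
    exact this
  choose F hF using step
  -- open cover of S by windows
  set W : {x : G → A // x ∈ S} → Set (G → A) :=
    fun σ => (↑(F σ) : Set G).pi (fun k => {σ.val k}) with hW
  have hWopen : ∀ σ, IsOpen (W σ) :=
    fun σ => isOpen_set_pi (F σ).finite_toSet (fun i _ => isOpen_discrete _)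
  have hWcover : S ⊆ ⋃ σ : {x : G → A // x ∈ S}, W σ := by
    intro x hx
    exact Set.mem_iUnion.2 ⟨⟨x, hx⟩, fun k _ => rfl⟩
  obtain ⟨t, ht⟩ := hScompact.elim_finite_subcover W hWopen hWcover
  set K : Finset G := insert (1 : G) (t.biUnion fun σ => F σ) with hK
  have h1K : (1 : G) ∈ K := Finset.mem_insert_self _ _
  -- key: f depends only on coordinates in K
  have key : ∀ σ τ : {x : G → A // x ∈ S},
      (∀ k ∈ K, σ.val k = τ.val k) → f σ = f τ := by
    intro σ τ hagree
    obtain ⟨σ', hσ't, hσ'⟩ := Set.mem_iUnion₂.1 (ht σ.prop)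
    have hFK : ∀ k ∈ F σ', k ∈ K := by
      intro k hk
      exact Finset.mem_insert_of_mem (Finset.mem_biUnion.2 ⟨σ', hσ't, hk⟩)
    have hσσ' : ∀ k ∈ F σ', σ.val k = σ'.val k := fun k hk => hσ' k hk
    have hτσ' : ∀ k ∈ F σ', τ.val k = σ'.val k := by
      intro k hk
      rw [← hagree k (hFK k hk)]; exact hσσ' k hk
    rw [hF σ' σ hσσ', hF σ' τ hτσ']
  -- the local rule
  set Φ : ({k : G // k ∈ K} → A) → A := fun p =>
    if h : ∃ σ : {x : G → A // x ∈ S}, ∀ k : {k : G // k ∈ K}, σ.val k.val = p k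
    then f h.choose else p ⟨1, h1K⟩ with hΦ
  refine ⟨K, h1K, Φ, fun σ g => ?_⟩
  have hτS : (fun h => σ.val (g⁻¹⁻¹ * h)) ∈ S := hinv g⁻¹ σ.val σ.prop
  set τ : {x : G → A // x ∈ S} := ⟨fun h => σ.val (g⁻¹⁻¹ * h), hτS⟩ with hτ
  have hτval : ∀ k : G, τ.val k = σ.val (g * k) := by
    intro k; simp [hτ]
  have hfτ : f τ = (φ σ).val g := by
    have := congrFun (hcomm g⁻¹ σ) 1
    simp only [inv_inv, mul_one] at this
    simpa [hf, τ] using this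
  have hex : ∃ σ' : {x : G → A // x ∈ S},
      ∀ k : {k : G // k ∈ K}, σ'.val k.val = (fun k : {k : G // k ∈ K} => σ.val (g * k.val)) k :=
    ⟨τ, fun k => hτval k.val⟩
  have : Φ (fun k => σ.val (g * k.val)) = f hex.choose := by
    simp only [hΦ]
    rw [dif_pos hex]
  rw [this, ← hfτ]
  apply key
  intro k hk
  rw [hτval k]
  exact (hex.choose_spec ⟨k, hk⟩).symm
end

section
/- Let A be a compact metrizable space and let Σ = A^ℤ with the shift action of ℤ. If A has no Borel probability measure invariant under all homeomorphisms of A, then (ℤ, Σ) admits no characteristic measure. In particular, for A the Cantor set, the full shift C^ℤ is a topologically transitive ℤ-system without characteristic measures. -/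
open MeasureTheory

/-- If a compact metrizable space `A` admits no Borel probability measure invariant under all
of its homeomorphisms, then the full shift `(ℤ, A^ℤ)` admits no characteristic measure;
moreover the full shift is topologically transitive. -/
theorem stmt17 {A : Type*} [TopologicalSpace A] [CompactSpace A]
    [TopologicalSpace.MetrizableSpace A] [Nonempty A]
    [MeasurableSpace A] [BorelSpace A]
    [MeasurableSpace (ℤ → A)] [BorelSpace (ℤ → A)]
    (hA : ¬ ∃ μ : Measure A, IsProbabilityMeasure μ ∧
      ∀ h : A ≃ₜ A, μ.map h = μ) :
    (¬ ∃ ν : Measure (ℤ → A), IsProbabilityMeasure ν ∧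
        ∀ φ : (ℤ → A) ≃ₜ (ℤ → A),
          (∀ (k : ℤ) (x : ℤ → A), φ (fun n => x (n + k)) = fun n => φ x (n + k)) →
          ν.map φ = ν)
    ∧ (∀ U W : Set (ℤ → A), IsOpen U → IsOpen W → U.Nonempty → W.Nonempty →
        ∃ (k : ℤ) (x : ℤ → A), x ∈ U ∧ (fun n => x (n + k)) ∈ W) := by
  constructor
  · rintro ⟨ν, hν, hchar⟩
    apply hA
    have heval : Measurable (fun x : ℤ → A => x 0) := (continuous_apply (0 : ℤ)).measurable
    refine ⟨ν.map (fun x => x 0), Measure.isProbabilityMeasure_map heval.aemeasurable, ?_⟩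
    intro ψ
    set φ : (ℤ → A) ≃ₜ (ℤ → A) := Homeomorph.piCongrRight (fun _ : ℤ => ψ) with hφ
    have hcomm : ∀ (k : ℤ) (x : ℤ → A), φ (fun n => x (n + k)) = fun n => φ x (n + k) := by
      intro k x; rfl
    have hinv : ν.map φ = ν := hchar φ hcomm
    have h1 : (ν.map (fun x => x 0)).map ψ = ν.map (fun x : ℤ → A => ψ (x 0)) := by
      rw [Measure.map_map ψ.continuous.measurable heval]
      rfl
    have h2 : ν.map (fun x : ℤ → A => ψ (x 0)) = (ν.map φ).map (fun x => x 0) := by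
      rw [Measure.map_map heval φ.continuous.measurable]
      rfl
    rw [h1, h2, hinv]
  · intro U W hU hW ⟨u, hu⟩ ⟨w, hw⟩
    obtain ⟨IU, VU, hVU, hVUsub⟩ := isOpen_pi_iff.mp hU u hu
    obtain ⟨IW, VW, hVW, hVWsub⟩ := isOpen_pi_iff.mp hW w hw
    obtain ⟨N, hN⟩ : ∃ N : ℤ, ∀ i ∈ IU, i ≤ N := IU.exists_le
    obtain ⟨m, hm⟩ : ∃ m : ℤ, ∀ i ∈ IW, m ≤ i := by
      obtain ⟨M, hM⟩ := (IW.image Neg.neg).exists_le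
      exact ⟨-M, fun i hi => by
        have := hM (-i) (Finset.mem_image_of_mem _ hi); omega⟩
    refine ⟨N + 1 - m, fun n => if n ∈ IU then u n else w (n - (N + 1 - m)), ?_, ?_⟩
    · apply hVUsub
      intro i hi
      simp only [Finset.mem_coe] at hi
      simp only [if_pos hi]
      exact (hVU i hi).2
    · apply hVWsub
      intro i hi
      simp only [Finset.mem_coe] at hi
      have h1 : i + (N + 1 - m) ∉ IU := by
        intro hmem
        have := hN _ hmem
        have := hm i hi
        omega
      simp only [if_neg h1]
      have : i + (N + 1 - m) - (N + 1 - m) = i := by ring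
      rw [this]
      exact (hVW i hi).2
end

section
/- The Cantor set C admits no Borel probability measure that is invariant under every homeomorphism of C. -/
open MeasureTheory

namespace Stmt18Aux

/-- piece maps for the 3-cycle homeomorphism -/
def A (x : ℕ → Bool) : ℕ → Bool := fun n => match n with
  | 0 => true | 1 => false | (m+2) => x (m+1)
def B (x : ℕ → Bool) : ℕ → Bool := fun n => match n with
  | 0 => true | 1 => true | (m+2) => x (m+2)
def C (x : ℕ → Bool) : ℕ → Bool := fun n => match n with
  | 0 => false | (m+1) => x (m+2)
def A' (y : ℕ → Bool) : ℕ → Bool := fun n => match n with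
  | 0 => false | (m+1) => y (m+2)
def B' (y : ℕ → Bool) : ℕ → Bool := fun n => match n with
  | 0 => true | 1 => false | (m+2) => y (m+2)
def C' (y : ℕ → Bool) : ℕ → Bool := fun n => match n with
  | 0 => true | 1 => true | (m+2) => y (m+1)

lemma contA : Continuous A := by
  refine continuous_pi fun n => ?_
  match n with
  | 0 => exact continuous_const
  | 1 => exact continuous_const
  | (m+2) => exact continuous_apply _

lemma contB : Continuous B := by
  refine continuous_pi fun n => ?_
  match n with
  | 0 => exact continuous_const
  | 1 => exact continuous_const
  | (m+2) => exact continuous_apply _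

lemma contC : Continuous C := by
  refine continuous_pi fun n => ?_
  match n with
  | 0 => exact continuous_const
  | (m+1) => exact continuous_apply _

lemma contA' : Continuous A' := by
  refine continuous_pi fun n => ?_
  match n with
  | 0 => exact continuous_const
  | (m+1) => exact continuous_apply _

lemma contB' : Continuous B' := by
  refine continuous_pi fun n => ?_
  match n with
  | 0 => exact continuous_const
  | 1 => exact continuous_const
  | (m+2) => exact continuous_apply _

lemma contC' : Continuous C' := by
  refine continuous_pi fun n => ?_
  match n with
  | 0 => exact continuous_const
  | 1 => exact continuous_const
  | (m+2) => exact continuous_apply _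

def hFun (x : ℕ → Bool) : ℕ → Bool :=
  if x 0 = false then A x else if x 1 = false then B x else C x

def gFun (y : ℕ → Bool) : ℕ → Bool :=
  if y 0 = false then C' y else if y 1 = false then A' y else B' y

lemma clopen_eval (k : ℕ) (b : Bool) : IsClopen {x : ℕ → Bool | x k = b} := by
  have : {x : ℕ → Bool | x k = b} = (fun x : ℕ → Bool => x k) ⁻¹' {b} := rfl
  rw [this]
  exact (isClopen_discrete _).preimage (continuous_apply k)

lemma frontier_eval (k : ℕ) (b : Bool) : frontier {x : ℕ → Bool | x k = b} = ∅ :=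
  (clopen_eval k b).frontier_eq

lemma cont_hFun : Continuous hFun := by
  unfold hFun
  refine Continuous.if ?_ contA (Continuous.if ?_ contB contC)
  · intro x hx; rw [frontier_eval] at hx; exact absurd hx (Set.notMem_empty x)
  · intro x hx; rw [frontier_eval] at hx; exact absurd hx (Set.notMem_empty x)

lemma cont_gFun : Continuous gFun := by
  unfold gFun
  refine Continuous.if ?_ contC' (Continuous.if ?_ contA' contB')
  · intro x hx; rw [frontier_eval] at hx; exact absurd hx (Set.notMem_empty x)
  · intro x hx; rw [frontier_eval] at hx; exact absurd hx (Set.notMem_empty x)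

lemma left_inv : Function.LeftInverse gFun hFun := by
  intro x
  funext n
  by_cases h0 : x 0 = false
  · have : hFun x = A x := by simp [hFun, h0]
    rw [this]
    have e0 : A x 0 = true := rfl
    have e1 : A x 1 = false := rfl
    simp only [gFun, e0, e1]
    norm_num
    match n with
    | 0 => simp [A', h0]
    | (m+1) => rfl
  · by_cases h1 : x 1 = false
    · have : hFun x = B x := by simp [hFun, h0, h1]
      rw [this]
      have e0 : B x 0 = true := rfl
      have e1 : B x 1 = true := rfl
      simp only [gFun, e0, e1]
      norm_num
      match n with
      | 0 => simp [B']; exact (Bool.not_eq_false _).mp h0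
      | 1 => simp [B', h1]
      | (m+2) => rfl
    · have : hFun x = C x := by simp [hFun, h0, h1]
      rw [this]
      have e0 : C x 0 = false := rfl
      simp only [gFun, e0]
      norm_num
      match n with
      | 0 => simp [C']; exact (Bool.not_eq_false _).mp h0
      | 1 => simp [C']; exact (Bool.not_eq_false _).mp h1
      | (m+2) => rfl

lemma right_inv : Function.RightInverse gFun hFun := by
  intro y
  funext n
  by_cases h0 : y 0 = false
  · have : gFun y = C' y := by simp [gFun, h0]
    rw [this]
    have e0 : C' y 0 = true := rfl
    have e1 : C' y 1 = true := rfl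
    simp only [hFun, e0, e1]
    norm_num
    match n with
    | 0 => simp [C, h0]
    | (m+1) => rfl
  · by_cases h1 : y 1 = false
    · have : gFun y = A' y := by simp [gFun, h0, h1]
      rw [this]
      have e0 : A' y 0 = false := rfl
      simp only [hFun, e0]
      norm_num
      match n with
      | 0 => simp [A]; exact (Bool.not_eq_false _).mp h0
      | 1 => simp [A, h1]
      | (m+2) => rfl
    · have : gFun y = B' y := by simp [gFun, h0, h1]
      rw [this]
      have e0 : B' y 0 = true := rfl
      have e1 : B' y 1 = false := rfl
      simp only [hFun, e0, e1]
      norm_num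
      match n with
      | 0 => simp [B]; exact (Bool.not_eq_false _).mp h0
      | 1 => simp [B]; exact (Bool.not_eq_false _).mp h1
      | (m+2) => rfl

/-- the 3-cycle homeomorphism -/
def cyc : (ℕ → Bool) ≃ₜ (ℕ → Bool) where
  toFun := hFun
  invFun := gFun
  left_inv := left_inv
  right_inv := right_inv
  continuous_toFun := cont_hFun
  continuous_invFun := cont_gFun

/-- flip coordinate 0 -/
def flip0 : (ℕ → Bool) ≃ₜ (ℕ → Bool) where
  toFun := fun x n => if n = 0 then !(x 0) else x n
  invFun := fun x n => if n = 0 then !(x 0) else x n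
  left_inv := by intro x; funext n; by_cases h : n = 0 <;> simp [h]
  right_inv := by intro x; funext n; by_cases h : n = 0 <;> simp [h]
  continuous_toFun := by
    refine continuous_pi fun n => ?_
    by_cases h : n = 0
    · simp only [h, if_pos]
      exact Continuous.comp (f := fun x : ℕ → Bool => x 0) (g := fun b => !b)
        continuous_of_discreteTopology (continuous_apply 0)
    · simp only [h, if_neg, ite_false]
      exact continuous_apply n
  continuous_invFun := by
    refine continuous_pi fun n => ?_
    by_cases h : n = 0
    · simp only [h, if_pos]
      exact Continuous.comp (f := fun x : ℕ → Bool => x 0) (g := fun b => !b)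
        continuous_of_discreteTopology (continuous_apply 0)
    · simp only [h, if_neg, ite_false]
      exact continuous_apply n

end Stmt18Aux

open Stmt18Aux

/-- The Cantor set (realized as `{0,1}^ℕ` with the product topology) admits no Borel
probability measure invariant under every homeomorphism of itself. -/
theorem stmt18 [MeasurableSpace (ℕ → Bool)] [BorelSpace (ℕ → Bool)] :
    ¬ ∃ μ : Measure (ℕ → Bool), IsProbabilityMeasure μ ∧
      ∀ h : (ℕ → Bool) ≃ₜ (ℕ → Bool), μ.map h = μ := by
  rintro ⟨μ, hprob, hinv⟩
  -- cylinder sets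
  set c0 : Set (ℕ → Bool) := {x | x 0 = false} with hc0
  set c1 : Set (ℕ → Bool) := {x | x 0 = true} with hc1
  set c10 : Set (ℕ → Bool) := {x | x 0 = true ∧ x 1 = false} with hc10
  set c11 : Set (ℕ → Bool) := {x | x 0 = true ∧ x 1 = true} with hc11
  have m0 : MeasurableSet c0 := (clopen_eval 0 false).isOpen.measurableSet
  have m1 : MeasurableSet c1 := (clopen_eval 0 true).isOpen.measurableSet
  have m10 : MeasurableSet c10 := by
    have : c10 = c1 ∩ {x | x 1 = false} := by ext x; simp [hc1, hc10, Set.mem_setOf_eq]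
    rw [this]; exact m1.inter (clopen_eval 1 false).isOpen.measurableSet
  have m11 : MeasurableSet c11 := by
    have : c11 = c1 ∩ {x | x 1 = true} := by ext x; simp [hc1, hc11, Set.mem_setOf_eq]
    rw [this]; exact m1.inter (clopen_eval 1 true).isOpen.measurableSet
  -- invariance gives μ (h ⁻¹' S) = μ S
  have key : ∀ (h : (ℕ → Bool) ≃ₜ (ℕ → Bool)) (S : Set (ℕ → Bool)),
      MeasurableSet S → μ (h ⁻¹' S) = μ S := by
    intro h S hS
    conv_rhs => rw [← hinv h]
    rw [Measure.map_apply h.continuous.measurable hS]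
  -- preimages under cyc
  have p1 : cyc ⁻¹' c10 = c0 := by
    ext x
    simp only [Set.mem_preimage, hc10, hc0, Set.mem_setOf_eq]
    show (hFun x 0 = true ∧ hFun x 1 = false) ↔ x 0 = false
    by_cases h0 : x 0 = false
    · have : hFun x = A x := by simp [hFun, h0]
      simp [this, A, h0]
    · by_cases h1 : x 1 = false
      · have : hFun x = B x := by simp [hFun, h0, h1]
        simp [this, B, h0]
      · have : hFun x = C x := by simp [hFun, h0, h1]
        simp [this, C, h0]
  have p2 : cyc ⁻¹' c11 = c10 := by
    ext x
    simp only [Set.mem_preimage, hc11, hc10, Set.mem_setOf_eq]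
    show (hFun x 0 = true ∧ hFun x 1 = true) ↔ (x 0 = true ∧ x 1 = false)
    by_cases h0 : x 0 = false
    · have : hFun x = A x := by simp [hFun, h0]
      simp [this, A, h0]
    · by_cases h1 : x 1 = false
      · have : hFun x = B x := by simp [hFun, h0, h1]
        simp [this, B, h1]
        exact (Bool.not_eq_false _).mp h0
      · have : hFun x = C x := by simp [hFun, h0, h1]
        simp [this, C, h1]
  -- preimage under flip0
  have p3 : flip0 ⁻¹' c0 = c1 := by
    ext x
    simp only [Set.mem_preimage, hc0, hc1, Set.mem_setOf_eq]
    show (if (0 : ℕ) = 0 then !(x 0) else x 0) = false ↔ x 0 = true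
    simp
  have e1 : μ c0 = μ c10 := by rw [← p1]; exact key cyc c10 m10
  have e2 : μ c10 = μ c11 := by rw [← p2]; exact key cyc c11 m11
  have e3 : μ c1 = μ c0 := by rw [← p3]; exact key flip0 c0 m0
  -- additivity
  have disj : Disjoint c10 c11 := by
    rw [Set.disjoint_left]
    rintro x ⟨_, hf⟩ ⟨_, ht⟩
    rw [hf] at ht; exact Bool.false_ne_true ht
  have union1 : c10 ∪ c11 = c1 := by
    ext x
    simp only [Set.mem_union, hc10, hc11, hc1, Set.mem_setOf_eq]
    constructor
    · rintro (⟨h, _⟩ | ⟨h, _⟩) <;> exact h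
    · intro h; rcases Bool.eq_false_or_eq_true (x 1) with h1 | h1
      · exact Or.inr ⟨h, h1⟩
      · exact Or.inl ⟨h, h1⟩
  have add1 : μ c1 = μ c10 + μ c11 := by
    rw [← union1, measure_union disj m11]
  have disj2 : Disjoint c0 c1 := by
    rw [Set.disjoint_left]
    intro x hf ht
    rw [Set.mem_setOf_eq] at hf ht
    rw [hf] at ht; exact Bool.false_ne_true ht
  have union2 : c0 ∪ c1 = Set.univ := by
    ext x
    simp only [Set.mem_union, hc0, hc1, Set.mem_setOf_eq, Set.mem_univ, iff_true]
    exact (Bool.eq_false_or_eq_true (x 0)).symm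
  have total : μ c0 + μ c1 = 1 := by
    rw [← measure_union disj2 m1, union2, measure_univ]
  -- finish: μ c0 = μ c10 = μ c11, μ c1 = μ c0, μ c1 = 2 μ c0
  have h2 : μ c0 = μ c0 + μ c0 := by
    calc μ c0 = μ c1 := e3.symm
    _ = μ c10 + μ c11 := add1
    _ = μ c0 + μ c0 := by rw [← e1, ← e2, ← e1]
  have hfin : μ c0 ≠ ⊤ := (measure_lt_top μ c0).ne
  have hzero : μ c0 = 0 := by
    have h3 : μ c0 + 0 = μ c0 + μ c0 := by rw [add_zero]; exact h2
    exact (WithTop.add_left_cancel hfin h3).symm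
  rw [e3, hzero, add_zero] at total
  exact zero_ne_one total
end
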